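/- Let D be a locally finite digraph and let R_1 be an anti-ray and R_2 a ray in D. Then there are infinitely many pairwise disjoint directed R_1–R_2 paths if and only if for every vertex x and every R ∈ ℕ there is a directed R_1–R_2 path avoiding B_R^+(x) ∪ B_R^-(x). -/

import Mathlib

/-!
Balls in a locally finite digraph are finite, so of infinitely many disjoint paths only finitely
many meet a given `B_R⁺(x) ∪ B_R⁻(x)`. Conversely, every vertex of an `R₁`–`R₂` path reaches the
ray `R₂`, so following `R₂` far enough, all vertices of finitely many such paths lie in a single
ball `B_N⁻(R₂ J)`; a path avoiding that ball is disjoint from all of them, and disjoint paths can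
be chosen one after another.
-/

open ENNReal

variable {V : Type*}

/-- The directed-path semimetric of a digraph. -/
noncomputable def ddist (adj : V → V → Prop) (x y : V) : ℕ∞ :=
  sInf {n : ℕ∞ | ∃ l : List V, List.Chain' adj (x :: l) ∧
    (x :: l).getLast (List.cons_ne_nil x l) = y ∧ n = (l.length : ℕ∞)}

/-- A ray in a digraph: an injective sequence of vertices with an edge from each
vertex to the next. -/
def IsRay (adj : V → V → Prop) (x : ℕ → V) : Prop :=
  Function.Injective x ∧ ∀ i : ℕ, adj (x i) (x (i + 1))

/-- An anti-ray in a digraph: an injective sequence of vertices with an edge from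
each vertex to the previous one. -/
def IsAntiRay (adj : V → V → Prop) (x : ℕ → V) : Prop :=
  Function.Injective x ∧ ∀ i : ℕ, adj (x (i + 1)) (x i)

/-- A directed `R₁`–`R₂` path: a directed walk starting at a vertex of `R₁` and
ending at a vertex of `R₂`. -/
def IsLinkPath (adj : V → V → Prop) (R₁ R₂ : ℕ → V) (l : List V) : Prop :=
  List.Chain' adj l ∧ (∃ i : ℕ, l.head? = some (R₁ i)) ∧ ∃ j : ℕ, l.getLast? = some (R₂ j)

section
variable {adj : V → V → Prop}

lemma ddist_le_coe_iff {x y : V} {R : ℕ} :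
    ddist adj x y ≤ R ↔
      ∃ l : List V, List.IsChain adj (x :: l) ∧ (x :: l).getLast? = some y ∧ l.length ≤ R := by
  constructor
  · intro h
    obtain ⟨_, ⟨l, hc, hy, rfl⟩, hl⟩ :=
      sInf_lt_iff.mp (h.trans_lt (Nat.cast_lt.mpr (Nat.lt_succ_self R)))
    exact ⟨l, hc, by rw [List.getLast?_eq_some_getLast (List.cons_ne_nil x l), hy],
      Nat.lt_succ_iff.mp (by exact_mod_cast hl)⟩
  · rintro ⟨l, hc, hy, hl⟩
    rw [List.getLast?_eq_some_getLast (List.cons_ne_nil x l), Option.some_inj] at hy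
    calc ddist adj x y ≤ l.length := sInf_le ⟨l, hc, hy, rfl⟩
      _ ≤ R := by exact_mod_cast hl

lemma ddist_le_length_of_mem {l : List V} {v z : V} (hc : List.IsChain adj l) (hv : v ∈ l)
    (hz : l.getLast? = some z) : ddist adj v z ≤ l.length := by
  obtain ⟨s, t, rfl⟩ := List.append_of_mem hv
  rw [List.getLast?_append_of_ne_nil s (List.cons_ne_nil v t)] at hz
  refine ddist_le_coe_iff.mpr ⟨t, hc.right_of_append, hz, ?_⟩
  simp only [List.length_append, List.length_cons]
  omega

lemma ddist_le_add {x y z : V} {a b : ℕ} (hxy : ddist adj x y ≤ a) (hyz : ddist adj y z ≤ b) :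
    ddist adj x z ≤ (a + b : ℕ) := by
  obtain ⟨l₁, hc₁, hy, hl₁⟩ := ddist_le_coe_iff.mp hxy
  obtain ⟨l₂, hc₂, hz, hl₂⟩ := ddist_le_coe_iff.mp hyz
  refine ddist_le_coe_iff.mpr ⟨l₁ ++ l₂, ?_, ?_, by rw [List.length_append]; omega⟩
  · rw [← List.cons_append]
    refine hc₁.append hc₂.tail fun p hp q hq => ?_
    rw [hy, Option.mem_some_iff] at hp
    subst hp
    exact hc₂.rel_head? hq
  · rcases l₂.eq_nil_or_concat with rfl | ⟨L, b, rfl⟩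
    · simpa [hy] using hz
    · simp only [List.getLast?_cons, List.getLast?_append] at hz ⊢
      simpa using hz

lemma ddist_flip_le {x y : V} {R : ℕ} (h : ddist adj y x ≤ R) :
    ddist (flip adj) x y ≤ R := by
  obtain ⟨l, hc, hx, hl⟩ := ddist_le_coe_iff.mp h
  obtain ⟨t, ht⟩ : ∃ t, (y :: l).reverse = x :: t := by
    rw [← List.head?_reverse] at hx
    exact ⟨_, (List.cons_head?_tail hx).symm⟩
  refine ddist_le_coe_iff.mpr ⟨t, ?_, ?_, ?_⟩
  · rw [← ht]
    exact List.isChain_reverse.mpr hc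
  · rw [← ht, List.getLast?_reverse]
    rfl
  · have hlen : t.length = l.length := by simpa using (congrArg List.length ht).symm
    omega

lemma finite_setOf_ddist_from_le (hout : ∀ v : V, {w | adj v w}.Finite) (R : ℕ) (x : V) :
    {v | ddist adj x v ≤ R}.Finite := by
  induction R generalizing x with
  | zero =>
    refine (Set.finite_singleton x).subset fun v hv => ?_
    obtain ⟨l, -, hv, hl⟩ := ddist_le_coe_iff.mp hv
    obtain rfl : l = [] := List.length_eq_zero_iff.mp (Nat.le_zero.mp hl)
    simpa [eq_comm] using hv
  | succ R ih =>
    refine ((Set.finite_singleton x).union ((hout x).biUnion fun w _ => ih w)).subset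
      fun v hv => ?_
    obtain ⟨l, hc, hv, hl⟩ := ddist_le_coe_iff.mp hv
    rcases l with _ | ⟨w, t⟩
    · left
      simpa [eq_comm] using hv
    · right
      obtain ⟨hxw, hwt⟩ := List.isChain_cons_cons.mp hc
      rw [List.length_cons] at hl
      exact Set.mem_biUnion hxw (ddist_le_coe_iff.mpr ⟨t, hwt, hv, by omega⟩)

lemma finite_setOf_ddist_to_le (hin : ∀ v : V, {w | adj w v}.Finite) (R : ℕ) (x : V) :
    {v | ddist adj v x ≤ R}.Finite :=
  (finite_setOf_ddist_from_le (adj := flip adj) hin R x).subset fun _ => ddist_flip_le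

lemma exists_forall_notMem_of_pairwise_disjoint {F : ℕ → List V}
    (hF : ∀ n n', n ≠ n' → ∀ v : V, v ∈ F n → v ∉ F n') {B : Set V} (hB : B.Finite) :
    ∃ n, ∀ v ∈ F n, v ∉ B := by
  by_contra! h
  choose g hgF hgB using h
  have hg : Function.Injective g := fun n n' e =>
    by_contra fun hne => hF n n' hne _ (hgF n) (e ▸ hgF n')
  exact hB.not_infinite (Set.infinite_of_injective_forall_mem hg hgB)

lemma ddist_le_add_of_ray {R₂ : ℕ → V} (hR₂ : ∀ i, adj (R₂ i) (R₂ (i + 1))) {v : V} {j n : ℕ}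
    (h : ddist adj v (R₂ j) ≤ n) (k : ℕ) : ddist adj v (R₂ (j + k)) ≤ (n + k : ℕ) := by
  induction k with
  | zero => simpa using h
  | succ k ih =>
    have hstep : ddist adj (R₂ (j + k)) (R₂ (j + k + 1)) ≤ (1 : ℕ) :=
      ddist_le_coe_iff.mpr ⟨[R₂ (j + k + 1)], List.isChain_pair.mpr (hR₂ _), rfl, le_rfl⟩
    simpa [← add_assoc] using ddist_le_add ih hstep

lemma exists_forall_ddist_le_ray_of_finset {R₁ R₂ : ℕ → V} (hR₂ : ∀ i, adj (R₂ i) (R₂ (i + 1)))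
    (s : Finset (List V)) (hs : ∀ l ∈ s, IsLinkPath adj R₁ R₂ l) :
    ∃ J N : ℕ, ∀ l ∈ s, ∀ v ∈ l, ddist adj v (R₂ J) ≤ N := by
  choose! j hj using fun l hl => (hs l hl).2.2
  refine ⟨s.sup j, s.sup List.length + s.sup j, fun l hl v hv => ?_⟩
  obtain ⟨k, hk⟩ := Nat.exists_eq_add_of_le (Finset.le_sup (f := j) hl)
  have hlen : l.length ≤ s.sup List.length := Finset.le_sup hl
  have hv := ddist_le_add_of_ray hR₂ (ddist_le_length_of_mem (hs l hl).1 hv (hj l hl)) k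
  rw [← hk] at hv
  exact hv.trans (by exact_mod_cast (by omega))

end

theorem disjoint_paths_iff_paths_outside_balls_general {V : Type*} (adj : V → V → Prop)
    (hout : ∀ v : V, {w | adj v w}.Finite) (hin : ∀ v : V, {w | adj w v}.Finite)
    (R₁ R₂ : ℕ → V) (h₂ : IsRay adj R₂) :
    (∃ F : ℕ → List V, (∀ n, IsLinkPath adj R₁ R₂ (F n)) ∧
      ∀ n n', n ≠ n' → ∀ v : V, v ∈ F n → v ∉ F n') ↔
    (∀ (x : V) (R : ℕ), ∃ l : List V, IsLinkPath adj R₁ R₂ l ∧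
      ∀ v ∈ l, ¬ ddist adj x v ≤ (R : ℕ∞) ∧ ¬ ddist adj v x ≤ (R : ℕ∞)) := by
  constructor
  · rintro ⟨F, hF, hdisj⟩ x R
    obtain ⟨n, hn⟩ := exists_forall_notMem_of_pairwise_disjoint hdisj
      ((finite_setOf_ddist_from_le hout R x).union (finite_setOf_ddist_to_le hin R x))
    exact ⟨F n, hF n, fun v hv => not_or.mp (hn v hv)⟩
  · intro hfar
    obtain ⟨F, hF, hdisj⟩ := exists_seq_of_forall_finset_exists (IsLinkPath adj R₁ R₂)
      (fun l l' => ∀ v ∈ l, v ∉ l') fun s hs => by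
        obtain ⟨J, N, hJN⟩ := exists_forall_ddist_le_ray_of_finset h₂.2 s hs
        obtain ⟨l, hl, hlfar⟩ := hfar (R₂ J) N
        exact ⟨l, hl, fun l' hl' v hv hvl => (hlfar v hvl).2 (hJN l' hl' v hv)⟩
    refine ⟨F, hF, fun n n' hne v hv hv' => ?_⟩
    rcases hne.lt_or_gt with h | h
    · exact hdisj n n' h v hv hv'
    · exact hdisj n' n h v hv' hv

/-- Let `D` be a locally finite digraph, `R₁` an anti-ray and `R₂` a ray.  Then
there are infinitely many pairwise disjoint directed `R₁`–`R₂` paths if and only if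
for every vertex `x` and every `R ∈ ℕ` there is a directed `R₁`–`R₂` path avoiding
`B_R⁺(x) ∪ B_R⁻(x)`. -/
theorem disjoint_paths_iff_paths_outside_balls {V : Type*} (adj : V → V → Prop)
    (hout : ∀ v : V, {w | adj v w}.Finite) (hin : ∀ v : V, {w | adj w v}.Finite)
    (R₁ R₂ : ℕ → V) (h₁ : IsAntiRay adj R₁) (h₂ : IsRay adj R₂) :
    (∃ F : ℕ → List V, (∀ n, IsLinkPath adj R₁ R₂ (F n)) ∧
      ∀ n n', n ≠ n' → ∀ v : V, v ∈ F n → v ∉ F n') ↔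
    (∀ (x : V) (R : ℕ), ∃ l : List V, IsLinkPath adj R₁ R₂ l ∧
      ∀ v ∈ l, ¬ ddist adj x v ≤ (R : ℕ∞) ∧ ¬ ddist adj v x ≤ (R : ℕ∞)) :=
  disjoint_paths_iff_paths_outside_balls_general adj hout hin R₁ R₂ h₂
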